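/- arXiv:2206.01293 — 2 statements merged into one kernel-verified Lean document; each statement's English description precedes it below -/
import Mathlib

section
/- Consider two finite-horizon MDPs M and M' over the same finite state space S and action space A, with horizon H, transition kernels P_h and P'_h, and reward functions r_h, r'_h taking values in [0,1]. Suppose for all s, a, h: Σ_{s'} |P_h(s'|s,a) - P'_h(s'|s,a)| ≤ ε₁ and |r_h(s,a) - r'_h(s,a)| ≤ ε₂. Then for any (non-stationary, deterministic) policy π and any initial state s₁, the difference in expected total reward satisfies |V₁^π(s₁; M) - V₁^π(s₁; M')| ≤ H(H-1)/2 · ε₁ + H · ε₂. -/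
/-- Value function of a finite-horizon MDP: `val H P r π h s` is the expected sum of
rewards from round `h` to `H - 1` starting at state `s` and following policy `π`. -/
noncomputable def val {S A : Type} [Fintype S] (H : ℕ) (P : ℕ → S → A → S → ℝ)
    (r : ℕ → S → A → ℝ) (π : ℕ → S → A) : ℕ → S → ℝ := fun h s =>
  if hh : h < H then
    r h s (π h s) + ∑ s' : S, P h s (π h s) s' * val H P r π (h + 1) s'
  else 0
termination_by h => H - h
decreasing_by omega

lemma abs_sum_mul_le_of_abs_le {S : Type} [Fintype S] (w f : S → ℝ) {c : ℝ}
    (hf : ∀ s, |f s| ≤ c) : |∑ s, w s * f s| ≤ (∑ s, |w s|) * c :=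
  calc |∑ s, w s * f s| ≤ ∑ s, |w s| * |f s| := by
        simpa only [abs_mul] using Finset.abs_sum_le_sum_abs (fun s => w s * f s) Finset.univ
    _ ≤ ∑ s, |w s| * c :=
        Finset.sum_le_sum fun s _ => mul_le_mul_of_nonneg_left (hf s) (abs_nonneg _)
    _ = (∑ s, |w s|) * c := (Finset.sum_mul _ _ _).symm

lemma sum_abs_eq_one_of_stochastic {S : Type} [Fintype S] {p : S → ℝ} (hp : ∀ s, 0 ≤ p s)
    (hp1 : ∑ s, p s = 1) : ∑ s, |p s| = 1 := by
  simpa only [abs_of_nonneg (hp _)] using hp1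

/-- Split `p·u - q·v = p·(u - v) + (p - q)·v`: the first term is an average of `u - v`,
the second is controlled by `‖p - q‖₁ ‖v‖∞`. -/
lemma abs_backup_sub_backup_le {S : Type} [Fintype S] {p q u v : S → ℝ} {a b δ ε B c : ℝ}
    (hp : ∀ s, 0 ≤ p s) (hp1 : ∑ s, p s = 1) (hab : |a - b| ≤ δ)
    (hpq : ∑ s, |p s - q s| ≤ ε) (huv : ∀ s, |u s - v s| ≤ B) (hv : ∀ s, |v s| ≤ c)
    (hc : 0 ≤ c) :
    |(a + ∑ s, p s * u s) - (b + ∑ s, q s * v s)| ≤ δ + B + ε * c := by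
  have hsplit : (a + ∑ s, p s * u s) - (b + ∑ s, q s * v s)
      = (a - b) + ∑ s, p s * (u s - v s) + ∑ s, (p s - q s) * v s := by
    simp only [mul_sub, sub_mul, Finset.sum_sub_distrib]
    ring
  have hexp : |∑ s, p s * (u s - v s)| ≤ B := by
    simpa only [sum_abs_eq_one_of_stochastic hp hp1, one_mul]
      using abs_sum_mul_le_of_abs_le p _ huv
  have hpert : |∑ s, (p s - q s) * v s| ≤ ε * c :=
    (abs_sum_mul_le_of_abs_le _ v hv).trans (mul_le_mul_of_nonneg_right hpq hc)
  rw [hsplit]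
  exact (abs_add_three _ _ _).trans (add_le_add_three hab hexp hpert)

section ValueFunction

variable {S A : Type} [Fintype S] {H : ℕ} {P : ℕ → S → A → S → ℝ} {r : ℕ → S → A → ℝ}
  {π : ℕ → S → A}

lemma val_of_lt {h : ℕ} (hh : h < H) (s : S) :
    val H P r π h s = r h s (π h s) + ∑ s', P h s (π h s) s' * val H P r π (h + 1) s' := by
  rw [val, dif_pos hh]

lemma val_of_le {h : ℕ} (hh : H ≤ h) (s : S) : val H P r π h s = 0 := by
  rw [val, dif_neg (not_lt.mpr hh)]

lemma abs_val_le (hP : ∀ h s a s', 0 ≤ P h s a s') (hP1 : ∀ h s a, ∑ s', P h s a s' = 1)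
    (hr : ∀ h s a, |r h s a| ≤ 1) (h : ℕ) (s : S) :
    |val H P r π h s| ≤ (H - h : ℕ) := by
  rcases lt_or_ge h H with hh | hh
  · have hnext : ((H - h : ℕ) : ℝ) = 1 + (H - (h + 1) : ℕ) := by
      rw [show H - h = H - (h + 1) + 1 by omega]
      push_cast
      ring
    have hexp : |∑ s', P h s (π h s) s' * val H P r π (h + 1) s'| ≤ (H - (h + 1) : ℕ) := by
      simpa only [sum_abs_eq_one_of_stochastic (hP h s (π h s)) (hP1 h s (π h s)), one_mul]
        using abs_sum_mul_le_of_abs_le (P h s (π h s)) _ (abs_val_le hP hP1 hr (h + 1))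
    rw [val_of_lt hh, hnext]
    exact (abs_add_le _ _).trans (add_le_add (hr h s (π h s)) hexp)
  · simp [val_of_le hh]
termination_by H - h

end ValueFunction

/-- With `n = H - h` rounds to go the value gap obeys `gap (n + 1) ≤ ε₂ + gap n + n ε₁`,
since the continuation values are bounded by `n`; summing gives `n (n - 1) / 2 * ε₁ + n ε₂`. -/
lemma abs_val_sub_val_le {S A : Type} [Fintype S] (H : ℕ) (ε₁ ε₂ : ℝ)
    (P P' : ℕ → S → A → S → ℝ) (r r' : ℕ → S → A → ℝ) (π : ℕ → S → A)
    (hP : ∀ h s a s', 0 ≤ P h s a s') (hP1 : ∀ h s a, ∑ s', P h s a s' = 1)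
    (hP' : ∀ h s a s', 0 ≤ P' h s a s') (hP1' : ∀ h s a, ∑ s', P' h s a s' = 1)
    (hr' : ∀ h s a, |r' h s a| ≤ 1)
    (hPclose : ∀ h s a, ∑ s', |P h s a s' - P' h s a s'| ≤ ε₁)
    (hrclose : ∀ h s a, |r h s a - r' h s a| ≤ ε₂) (h : ℕ) (s : S) :
    |val H P r π h s - val H P' r' π h s|
      ≤ (H - h : ℕ) * ((H - h : ℕ) - 1) / 2 * ε₁ + (H - h : ℕ) * ε₂ := by
  rcases lt_or_ge h H with hh | hh
  · set n : ℕ := H - (h + 1)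
    have hstep := abs_backup_sub_backup_le (hP h s (π h s)) (hP1 h s (π h s))
      (hrclose h s (π h s)) (hPclose h s (π h s))
      (abs_val_sub_val_le H ε₁ ε₂ P P' r r' π hP hP1 hP' hP1' hr' hPclose hrclose (h + 1))
      (abs_val_le hP' hP1' hr' (h + 1)) n.cast_nonneg
    rw [val_of_lt hh, val_of_lt hh, show H - h = n + 1 by omega]
    push_cast
    linarith
  · simp [val_of_le hh, Nat.sub_eq_zero_of_le hh]
termination_by H - h

theorem stmt_9_general {S A : Type} [Fintype S] (H : ℕ) (ε₁ ε₂ : ℝ)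
    (P P' : ℕ → S → A → S → ℝ) (r r' : ℕ → S → A → ℝ) (π : ℕ → S → A)
    (hP : ∀ h s a s', 0 ≤ P h s a s') (hP1 : ∀ h s a, ∑ s' : S, P h s a s' = 1)
    (hP' : ∀ h s a s', 0 ≤ P' h s a s') (hP1' : ∀ h s a, ∑ s' : S, P' h s a s' = 1)
    (hr' : ∀ h s a, r' h s a ∈ Set.Icc (0 : ℝ) 1)
    (hPclose : ∀ h s a, ∑ s' : S, |P h s a s' - P' h s a s'| ≤ ε₁)
    (hrclose : ∀ h s a, |r h s a - r' h s a| ≤ ε₂)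
    (s₁ : S) :
    |val H P r π 0 s₁ - val H P' r' π 0 s₁| ≤ H * (H - 1) / 2 * ε₁ + H * ε₂ := by
  have hr'abs : ∀ h s a, |r' h s a| ≤ 1 := fun h s a =>
    abs_le.mpr ⟨by linarith [(hr' h s a).1], (hr' h s a).2⟩
  simpa using abs_val_sub_val_le H ε₁ ε₂ P P' r r' π hP hP1 hP' hP1' hr'abs hPclose hrclose 0 s₁

theorem stmt_9 {S A : Type} [Fintype S] (H : ℕ) (ε₁ ε₂ : ℝ)
    (P P' : ℕ → S → A → S → ℝ) (r r' : ℕ → S → A → ℝ) (π : ℕ → S → A)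
    (hP : ∀ h s a s', 0 ≤ P h s a s') (hP1 : ∀ h s a, ∑ s' : S, P h s a s' = 1)
    (hP' : ∀ h s a s', 0 ≤ P' h s a s') (hP1' : ∀ h s a, ∑ s' : S, P' h s a s' = 1)
    (hr : ∀ h s a, r h s a ∈ Set.Icc (0 : ℝ) 1)
    (hr' : ∀ h s a, r' h s a ∈ Set.Icc (0 : ℝ) 1)
    (hPclose : ∀ h s a, ∑ s' : S, |P h s a s' - P' h s a s'| ≤ ε₁)
    (hrclose : ∀ h s a, |r h s a - r' h s a| ≤ ε₂)
    (s₁ : S) :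
    |val H P r π 0 s₁ - val H P' r' π 0 s₁| ≤ H * (H - 1) / 2 * ε₁ + H * ε₂ :=
  stmt_9_general H ε₁ ε₂ P P' r r' π hP hP1 hP' hP1' hr' hPclose hrclose s₁
end

section
/- In the simulation lemma setting, the inductive step holds: if for all states s', |V_{h+1}^π(s'; M) - V_{h+1}^π(s'; M')| ≤ (H-h-1)(H-h)/2 · ε₁ + (H-h)ε₂, and transitions/rewards differ by at most ε₁ (in total variation, doubled) and ε₂ respectively, and 0 ≤ V_{h+1}^π(·; M) ≤ H - h, then |V_h^π(s; M) - V_h^π(s; M')| ≤ (H-h)(H-h+1)/2 · ε₁ + (H-h+1)ε₂ for all s. -/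
/-!
Subtracting the two Bellman equations at `s`, the value gap splits into the reward gap (at most
`ε₂`), the transition gap tested against `Vnext` (at most `ε₁ (H - h)`, since `0 ≤ Vnext ≤ H - h`),
and the `P'`-average of the gaps at step `h + 1` (at most the induction bound, `P'` being a
probability vector). The three bounds add up to the claimed one by
`(H - h - 1)(H - h) / 2 + (H - h) = (H - h)(H - h + 1) / 2`.
-/

open Finset

section

variable {ι R : Type*} [CommRing R] [LinearOrder R] [IsStrictOrderedRing R]

theorem abs_sum_mul_le_sum_abs_mul (s : Finset ι) {w f : ι → R} {B : R}
    (hf : ∀ i ∈ s, |f i| ≤ B) : |∑ i ∈ s, w i * f i| ≤ (∑ i ∈ s, |w i|) * B :=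
  calc |∑ i ∈ s, w i * f i| ≤ ∑ i ∈ s, |w i * f i| := abs_sum_le_sum_abs _ _
    _ ≤ ∑ i ∈ s, |w i| * B := sum_le_sum fun i hi => by
          rw [abs_mul]; exact mul_le_mul_of_nonneg_left (hf i hi) (abs_nonneg _)
    _ = (∑ i ∈ s, |w i|) * B := (sum_mul _ _ _).symm

variable [Fintype ι]

theorem abs_sum_mul_sub_sum_mul_le {p q f g : ι → R} {ε B C : R}
    (hq : ∀ i, 0 ≤ q i) (hq1 : ∑ i, q i = 1) (hpq : ∑ i, |p i - q i| ≤ ε) (hB : 0 ≤ B)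
    (hf : ∀ i, |f i| ≤ B) (hfg : ∀ i, |f i - g i| ≤ C) :
    |∑ i, p i * f i - ∑ i, q i * g i| ≤ ε * B + C := by
  have hsplit : ∑ i, p i * f i - ∑ i, q i * g i =
      ∑ i, (p i - q i) * f i + ∑ i, q i * (f i - g i) := by
    rw [← sum_add_distrib, ← sum_sub_distrib]
    exact sum_congr rfl fun i _ => by ring
  have htransition : |∑ i, (p i - q i) * f i| ≤ ε * B :=
    (abs_sum_mul_le_sum_abs_mul _ fun i _ => hf i).trans (mul_le_mul_of_nonneg_right hpq hB)
  have haverage : |∑ i, q i * (f i - g i)| ≤ C := by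
    simpa only [abs_of_nonneg (hq _), hq1, one_mul] using
      abs_sum_mul_le_sum_abs_mul univ (w := q) fun i _ => hfg i
  rw [hsplit]
  exact (abs_add_le _ _).trans (add_le_add htransition haverage)

end

theorem stmt_10_general {S A : Type} [Fintype S] (H h : ℕ) (ε₁ ε₂ : ℝ)
    (P P' : S → A → S → ℝ) (r r' : S → A → ℝ) (π : S → A)
    (V V' Vnext Vnext' : S → ℝ)
    (hBell : ∀ s, V s = r s (π s) + ∑ s' : S, P s (π s) s' * Vnext s')
    (hBell' : ∀ s, V' s = r' s (π s) + ∑ s' : S, P' s (π s) s' * Vnext' s')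
    (hP' : ∀ s a s', 0 ≤ P' s a s') (hP1' : ∀ s a, ∑ s' : S, P' s a s' = 1)
    (hPclose : ∀ s a, ∑ s' : S, |P s a s' - P' s a s'| ≤ ε₁)
    (hrclose : ∀ s a, |r s a - r' s a| ≤ ε₂)
    (hVnext : ∀ s', 0 ≤ Vnext s' ∧ Vnext s' ≤ (H : ℝ) - h)
    (hIH : ∀ s', |Vnext s' - Vnext' s'| ≤
      ((H : ℝ) - h - 1) * ((H : ℝ) - h) / 2 * ε₁ + ((H : ℝ) - h) * ε₂) :
    ∀ s, |V s - V' s| ≤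
      ((H : ℝ) - h) * ((H : ℝ) - h + 1) / 2 * ε₁ + ((H : ℝ) - h + 1) * ε₂ := by
  intro s
  have hVnext_abs : ∀ s', |Vnext s'| ≤ (H : ℝ) - h := fun s' =>
    (abs_of_nonneg (hVnext s').1).trans_le (hVnext s').2
  have hexpect := abs_sum_mul_sub_sum_mul_le (hP' s (π s)) (hP1' s (π s)) (hPclose s (π s))
    ((abs_nonneg _).trans (hVnext_abs s)) hVnext_abs hIH
  calc |V s - V' s|
      = |(r s (π s) - r' s (π s)) + (∑ s', P s (π s) s' * Vnext s' -
          ∑ s', P' s (π s) s' * Vnext' s')| := by rw [hBell, hBell']; congr 1; ring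
    _ ≤ ε₂ + (ε₁ * ((H : ℝ) - h) +
          (((H : ℝ) - h - 1) * ((H : ℝ) - h) / 2 * ε₁ + ((H : ℝ) - h) * ε₂)) :=
        (abs_add_le _ _).trans (add_le_add (hrclose _ _) hexpect)
    _ = ((H : ℝ) - h) * ((H : ℝ) - h + 1) / 2 * ε₁ + ((H : ℝ) - h + 1) * ε₂ := by ring

theorem stmt_10 {S A : Type} [Fintype S] (H h : ℕ) (hh : h < H) (ε₁ ε₂ : ℝ)
    (P P' : S → A → S → ℝ) (r r' : S → A → ℝ) (π : S → A)
    (V V' Vnext Vnext' : S → ℝ)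
    (hBell : ∀ s, V s = r s (π s) + ∑ s' : S, P s (π s) s' * Vnext s')
    (hBell' : ∀ s, V' s = r' s (π s) + ∑ s' : S, P' s (π s) s' * Vnext' s')
    (hP' : ∀ s a s', 0 ≤ P' s a s') (hP1' : ∀ s a, ∑ s' : S, P' s a s' = 1)
    (hPclose : ∀ s a, ∑ s' : S, |P s a s' - P' s a s'| ≤ ε₁)
    (hrclose : ∀ s a, |r s a - r' s a| ≤ ε₂)
    (hVnext : ∀ s', 0 ≤ Vnext s' ∧ Vnext s' ≤ (H : ℝ) - h)
    (hIH : ∀ s', |Vnext s' - Vnext' s'| ≤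
      ((H : ℝ) - h - 1) * ((H : ℝ) - h) / 2 * ε₁ + ((H : ℝ) - h) * ε₂) :
    ∀ s, |V s - V' s| ≤
      ((H : ℝ) - h) * ((H : ℝ) - h + 1) / 2 * ε₁ + ((H : ℝ) - h + 1) * ε₂ :=
  stmt_10_general H h ε₁ ε₂ P P' r r' π V V' Vnext Vnext' hBell hBell' hP' hP1' hPclose hrclose
    hVnext hIH
end
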